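/- arXiv:2206.12208 — 2 statements merged into one kernel-verified Lean document; each statement's English description precedes it below -/
import Mathlib

section
/- One has (1/8)·( ∫_{v=0}^{1} (6−4v) dv + ∫_{v=1}^{2} (6−4v+2(v−1)²) dv + ∫_{u=1}^{2}∫_{v=0}^{2−u} (6+6(u−1)²−12(u−1)−4v+4(u−1)v) dv du + ∫_{u=1}^{2}∫_{v=2−u}^{4−2u} (6+6(u−1)²−12(u−1)−4v+4(u−1)v+2(u+v−2)²) dv du ) = 35/48, and 35/48 < 1. -/
open intervalIntegral

lemma int_poly (a b c0 c1 c2 c3 : ℝ) :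
    (∫ x in a..b, (c0 + c1 * x + c2 * x ^ 2 + c3 * x ^ 3)) =
      c0 * (b - a) + c1 * (b ^ 2 - a ^ 2) / 2 + c2 * (b ^ 3 - a ^ 3) / 3
        + c3 * (b ^ 4 - a ^ 4) / 4 := by
  have hd : ∀ x ∈ Set.uIcc a b,
      HasDerivAt (fun x : ℝ => c0 * x + c1 * x ^ 2 / 2 + c2 * x ^ 3 / 3 + c3 * x ^ 4 / 4)
        (c0 + c1 * x + c2 * x ^ 2 + c3 * x ^ 3) x := by
    intro x _
    have h : HasDerivAt (fun x : ℝ => c0 * x + c1 * x ^ 2 / 2 + c2 * x ^ 3 / 3 + c3 * x ^ 4 / 4)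
        (c0 * 1 + (c1 * ((2:ℕ) * x ^ 1)) / 2 + (c2 * ((3:ℕ) * x ^ 2)) / 3
          + (c3 * ((4:ℕ) * x ^ 3)) / 4) x :=
      ((((hasDerivAt_id x).const_mul c0).add
        (((hasDerivAt_pow 2 x).const_mul c1).div_const 2)).add
        (((hasDerivAt_pow 3 x).const_mul c2).div_const 3)).add
        (((hasDerivAt_pow 4 x).const_mul c3).div_const 4)
    convert h using 1
    push_cast
    ring
  rw [intervalIntegral.integral_eq_sub_of_hasDerivAt hd
    (Continuous.intervalIntegrable (by continuity) a b)]
  ring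

/-- `S(W^Y;Z) = 35/48 < 1` for a 0-curve `Z` on a sextic del Pezzo fiber `Y`. -/
theorem S_WY_zero_curve :
    (1 / 8 : ℝ) *
      ((∫ v in (0:ℝ)..1, (6 - 4 * v)) +
       (∫ v in (1:ℝ)..2, (6 - 4 * v + 2 * (v - 1) ^ 2)) +
       (∫ u in (1:ℝ)..2, ∫ v in (0:ℝ)..(2 - u),
          (6 + 6 * (u - 1) ^ 2 - 12 * (u - 1) - 4 * v + 4 * (u - 1) * v)) +
       (∫ u in (1:ℝ)..2, ∫ v in (2 - u)..(4 - 2 * u),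
          (6 + 6 * (u - 1) ^ 2 - 12 * (u - 1) - 4 * v + 4 * (u - 1) * v
            + 2 * (u + v - 2) ^ 2))) = 35 / 48 ∧ (35 / 48 : ℝ) < 1 := by
  have h1 : (∫ v in (0:ℝ)..1, (6 - 4 * v)) = 4 := by
    rw [intervalIntegral.integral_congr
      (g := fun v : ℝ => 6 + (-4) * v + 0 * v ^ 2 + 0 * v ^ 3) (fun v _ => by ring), int_poly]
    norm_num
  have h2 : (∫ v in (1:ℝ)..2, (6 - 4 * v + 2 * (v - 1) ^ 2)) = 2 / 3 := by
    rw [intervalIntegral.integral_congr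
      (g := fun v : ℝ => 8 + (-8) * v + 2 * v ^ 2 + 0 * v ^ 3) (fun v _ => by ring), int_poly]
    norm_num
  have hin3 : ∀ u : ℝ, (∫ v in (0:ℝ)..(2 - u),
      (6 + 6 * (u - 1) ^ 2 - 12 * (u - 1) - 4 * v + 4 * (u - 1) * v))
      = 32 + (-48) * u + 24 * u ^ 2 + (-4) * u ^ 3 := by
    intro u
    rw [intervalIntegral.integral_congr
      (g := fun v : ℝ => (6 + 6 * (u - 1) ^ 2 - 12 * (u - 1)) + (4 * u - 8) * v
        + 0 * v ^ 2 + 0 * v ^ 3) (fun v _ => by ring), int_poly]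
    ring
  have h3 : (∫ u in (1:ℝ)..2, ∫ v in (0:ℝ)..(2 - u),
      (6 + 6 * (u - 1) ^ 2 - 12 * (u - 1) - 4 * v + 4 * (u - 1) * v)) = 1 := by
    simp_rw [hin3]
    rw [int_poly]
    norm_num
  have hin4 : ∀ u : ℝ, (∫ v in (2 - u)..(4 - 2 * u),
      (6 + 6 * (u - 1) ^ 2 - 12 * (u - 1) - 4 * v + 4 * (u - 1) * v + 2 * (u + v - 2) ^ 2))
      = 16 / 3 + (-8) * u + 4 * u ^ 2 + (-2 / 3) * u ^ 3 := by
    intro u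
    rw [intervalIntegral.integral_congr
      (g := fun v : ℝ => (8 * (u - 2) ^ 2) + (8 * (u - 2)) * v + 2 * v ^ 2 + 0 * v ^ 3)
      (fun v _ => by ring), int_poly]
    ring
  have h4 : (∫ u in (1:ℝ)..2, ∫ v in (2 - u)..(4 - 2 * u),
      (6 + 6 * (u - 1) ^ 2 - 12 * (u - 1) - 4 * v + 4 * (u - 1) * v + 2 * (u + v - 2) ^ 2))
      = 1 / 6 := by
    simp_rw [hin4]
    rw [int_poly]
    norm_num
  rw [h1, h2, h3, h4]
  norm_num
end

section
/- One has (1/8)·( ∫_{v=0}^{1} (6−2v−v²) dv + ∫_{v=1}^{2} (6−2v−v²+2(v−1)²) dv + ∫_{u=1}^{2}∫_{v=0}^{2−u} (6+6(u−1)²−v²−12(u−1)−2v+2(u−1)v) dv du + ∫_{u=1}^{2}∫_{v=2−u}^{4−2u} (6+6(u−1)²−v²−12(u−1)−2v+2(u−1)v+2(u+v−2)²) dv du ) = 15/16, and 15/16 < 1. -/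
open intervalIntegral

/-! The integrands are the volumes `vol(P(u)|_Y - vZ)` on the Zariski chambers, all polynomial.
After integrating in `v`, both double integrals become `c · (2 - u)³` with `c = 14/3` and `c = 4/3`, so they contribute `7/6` and `1/3`; together with
`14/3` and `4/3` from the single integrals the bracket is `15/2`. -/

theorem integral_eq_of_eq_cubic {f : ℝ → ℝ} {a b : ℝ} (c₀ c₁ c₂ c₃ : ℝ)
    (hf : ∀ v, f v = c₀ + c₁ * v + c₂ * v ^ 2 + c₃ * v ^ 3) :
    ∫ v in a..b, f v =
      c₀ * (b - a) + c₁ * (b ^ 2 - a ^ 2) / 2 + c₂ * (b ^ 3 - a ^ 3) / 3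
        + c₃ * (b ^ 4 - a ^ 4) / 4 := by
  have hF : ∀ x : ℝ, HasDerivAt
      (fun v => c₀ * v + c₁ * v ^ 2 / 2 + c₂ * v ^ 3 / 3 + c₃ * v ^ 4 / 4) (f x) x := by
    intro x
    refine ((((hasDerivAt_id x).const_mul c₀).add
        (((hasDerivAt_pow 2 x).const_mul c₁).div_const 2)).add
        (((hasDerivAt_pow 3 x).const_mul c₂).div_const 3)).add
        (((hasDerivAt_pow 4 x).const_mul c₃).div_const 4) |>.congr_deriv ?_
    rw [hf]
    push_cast
    ring
  have hcont : Continuous f := by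
    rw [funext hf]
    fun_prop
  rw [integral_eq_sub_of_hasDerivAt (fun x _ => hF x) (hcont.intervalIntegrable a b)]
  ring

theorem integral_vol_zero_one : ∫ v in (0:ℝ)..1, (6 - 2 * v - v ^ 2) = 14 / 3 :=
  (integral_eq_of_eq_cubic 6 (-2) (-1) 0 fun v => by ring).trans (by norm_num)

theorem integral_vol_one_two :
    ∫ v in (1:ℝ)..2, (6 - 2 * v - v ^ 2 + 2 * (v - 1) ^ 2) = 4 / 3 :=
  (integral_eq_of_eq_cubic 8 (-6) 1 0 fun v => by ring).trans (by norm_num)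

theorem integral_cube_two_sub (c : ℝ) : ∫ u in (1:ℝ)..2, c * (2 - u) ^ 3 = c / 4 :=
  (integral_eq_of_eq_cubic (8 * c) (-12 * c) (6 * c) (-c) fun u => by ring).trans (by ring)

theorem inner_integral_vol_lower (u : ℝ) :
    ∫ v in (0:ℝ)..(2 - u),
        (6 + 6 * (u - 1) ^ 2 - v ^ 2 - 12 * (u - 1) - 2 * v + 2 * (u - 1) * v) =
      14 / 3 * (2 - u) ^ 3 :=
  (integral_eq_of_eq_cubic (6 + 6 * (u - 1) ^ 2 - 12 * (u - 1)) (2 * u - 4) (-1) 0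
    fun v => by ring).trans (by ring)

theorem inner_integral_vol_upper (u : ℝ) :
    ∫ v in (2 - u)..(4 - 2 * u),
        (6 + 6 * (u - 1) ^ 2 - v ^ 2 - 12 * (u - 1) - 2 * v + 2 * (u - 1) * v
          + 2 * (u + v - 2) ^ 2) =
      4 / 3 * (2 - u) ^ 3 :=
  (integral_eq_of_eq_cubic (6 + 6 * (u - 1) ^ 2 - 12 * (u - 1) + 2 * (u - 2) ^ 2) (6 * u - 12) 1 0
    fun v => by ring).trans (by ring)

/-- `S(W^Y;Z) = 15/16 < 1` for a `(-1)`-curve `Z = E₁` on a smooth sextic del Pezzo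
fiber `Y`. -/
theorem S_WY_minus_one_curve :
    (1 / 8 : ℝ) *
      ((∫ v in (0:ℝ)..1, (6 - 2 * v - v ^ 2)) +
       (∫ v in (1:ℝ)..2, (6 - 2 * v - v ^ 2 + 2 * (v - 1) ^ 2)) +
       (∫ u in (1:ℝ)..2, ∫ v in (0:ℝ)..(2 - u),
          (6 + 6 * (u - 1) ^ 2 - v ^ 2 - 12 * (u - 1) - 2 * v + 2 * (u - 1) * v)) +
       (∫ u in (1:ℝ)..2, ∫ v in (2 - u)..(4 - 2 * u),
          (6 + 6 * (u - 1) ^ 2 - v ^ 2 - 12 * (u - 1) - 2 * v + 2 * (u - 1) * v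
            + 2 * (u + v - 2) ^ 2))) = 15 / 16 ∧ (15 / 16 : ℝ) < 1 := by
  simp only [integral_vol_zero_one, integral_vol_one_two, inner_integral_vol_lower,
    inner_integral_vol_upper, integral_cube_two_sub]
  norm_num
end
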